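/- arXiv:2506.19555 — 3 statements merged into one kernel-verified Lean document; each statement's English description precedes it below -/
import Mathlib

section
/- (Poincaré–Miranda theorem in two variables.) Let F, G : [a₁, a₂] × [t₁, t₂] → ℝ be continuous functions. Suppose that (1) F(a, t₁) > 0 and F(a, t₂) < 0 for all a ∈ [a₁, a₂], and (2) G(a₁, t) < 0 and G(a₂, t) > 0 for all t ∈ [t₁, t₂]. Then there exists a point (a₀, t₀) ∈ [a₁, a₂] × [t₁, t₂] such that F(a₀, t₀) = 0 and G(a₀, t₀) = 0. -/
/-!
Label the points of a fine `n × n` grid on the rectangle by the signs of `F` and `G`, as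
elements of `ZMod 2`. Call a grid edge a door if `F > 0` at both ends and `G` changes sign
along it. Every interior edge bounds two cells, so the parities of the door counts of all cells
add up to the parity of the number of doors on the boundary of the rectangle, which is odd: along
the bottom `F > 0` and `G` goes from negative to positive, the top has no point with `F > 0`,
and `G` has constant sign on each vertical side. A cell with an odd number of doors sees both
signs of `F` and both signs of `G` at its corners, so by uniform continuity its corners are
approximate common zeros of `F` and `G`; compactness turns these into an exact common zero.
-/

open Set
open AffineMap (lineMap)
open Finset (range)

theorem ZMod.eq_add_one_of_ne {x b : ZMod 2} (h : x ≠ b) : x = b + 1 := by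
  revert x b; decide

theorem IsCompact.exists_eq_zero_of_forall_exists_norm_lt {X E : Type*} [TopologicalSpace X]
    [NormedAddCommGroup E] {K : Set X} {f : X → E} (hK : IsCompact K) (hf : ContinuousOn f K)
    (h : ∀ ε > 0, ∃ x ∈ K, ‖f x‖ < ε) : ∃ x ∈ K, f x = 0 := by
  obtain ⟨x₀, hx₀, -⟩ := h 1 one_pos
  obtain ⟨x, hx, hmin⟩ := hK.exists_isMinOn ⟨x₀, hx₀⟩ hf.norm
  refine ⟨x, hx, norm_le_zero_iff.mp (not_lt.mp fun hpos => ?_)⟩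
  obtain ⟨y, hy, hlt⟩ := h _ hpos
  exact (hmin hy).not_gt hlt

namespace PoincareMiranda

theorem sum_range_add_succ_of_charTwo {R : Type*} [Ring R] [CharP R 2] (x : ℕ → R) (n : ℕ) :
    ∑ j ∈ range n, (x j + x (j + 1)) = x 0 + x n := by
  simpa only [CharTwo.sub_eq_add] using Finset.sum_range_sub' x n

section Parity

variable (f g : ℕ × ℕ → ZMod 2)

def edgeWeight (c d : ℕ × ℕ) : ZMod 2 := f c * f d * (g c + g d)

def cellWeight (i j : ℕ) : ZMod 2 :=
  edgeWeight f g (i, j) (i + 1, j) + edgeWeight f g (i, j + 1) (i + 1, j + 1) +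
    (edgeWeight f g (i, j) (i, j + 1) + edgeWeight f g (i + 1, j) (i + 1, j + 1))

theorem sum_cellWeight (n : ℕ) :
    ∑ i ∈ range n, ∑ j ∈ range n, cellWeight f g i j =
      ∑ i ∈ range n, (edgeWeight f g (i, 0) (i + 1, 0) + edgeWeight f g (i, n) (i + 1, n)) +
        ∑ j ∈ range n, (edgeWeight f g (0, j) (0, j + 1) + edgeWeight f g (n, j) (n, j + 1)) := by
  set H : ℕ → ℕ → ZMod 2 := fun i j => edgeWeight f g (i, j) (i + 1, j)
  set V : ℕ → ℕ → ZMod 2 := fun i j => edgeWeight f g (i, j) (i, j + 1)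
  calc _ = ∑ i ∈ range n, ∑ j ∈ range n, (H i j + H i (j + 1)) +
        ∑ j ∈ range n, ∑ i ∈ range n, (V i j + V (i + 1) j) := by
        rw [Finset.sum_comm (f := fun j i => V i j + V (i + 1) j), ← Finset.sum_add_distrib]
        simp only [← Finset.sum_add_distrib]
        rfl
    _ = _ := by simp only [sum_range_add_succ_of_charTwo]; rfl

theorem exists_eq_of_cellWeight_ne_zero {i j : ℕ} (h : cellWeight f g i j ≠ 0) (b : ZMod 2) :
    (∃ c ∈ Icc (i, j) (i + 1, j + 1), f c = b) ∧ (∃ c ∈ Icc (i, j) (i + 1, j + 1), g c = b) := by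
  have h₀₀ : (i, j) ∈ Icc (i, j) (i + 1, j + 1) := by simp
  have h₁₀ : (i + 1, j) ∈ Icc (i, j) (i + 1, j + 1) := by simp
  have h₀₁ : (i, j + 1) ∈ Icc (i, j) (i + 1, j + 1) := by simp
  have h₁₁ : (i + 1, j + 1) ∈ Icc (i, j) (i + 1, j + 1) := by simp
  -- A label that misses `b` on the cell is constantly `b + 1` there, and then the terms of the
  -- cell weight cancel in pairs.
  constructor
  · by_contra! hf
    have hf c (hc : c ∈ Icc (i, j) (i + 1, j + 1)) : f c = b + 1 :=
      ZMod.eq_add_one_of_ne (hf c hc)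
    apply h
    simp only [cellWeight, edgeWeight, hf _ h₀₀, hf _ h₁₀, hf _ h₀₁, hf _ h₁₁]
    have two : (2 : ZMod 2) = 0 := rfl
    linear_combination
      (b + 1) ^ 2 * (g (i, j) + g (i + 1, j) + g (i, j + 1) + g (i + 1, j + 1)) * two
  · by_contra! hg
    have hg c (hc : c ∈ Icc (i, j) (i + 1, j + 1)) : g c = b + 1 :=
      ZMod.eq_add_one_of_ne (hg c hc)
    apply h
    simp only [cellWeight, edgeWeight, hg _ h₀₀, hg _ h₁₀, hg _ h₀₁, hg _ h₁₁,
      CharTwo.add_self_eq_zero, mul_zero]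

variable {f g} in
theorem exists_cell_forall_exists_eq {n : ℕ}
    (hf_bot : ∀ i ≤ n, f (i, 0) = 1) (hf_top : ∀ i ≤ n, f (i, n) = 0)
    (hg_left : ∀ j ≤ n, g (0, j) = 0) (hg_right : ∀ j ≤ n, g (n, j) = 1) :
    ∃ i < n, ∃ j < n, ∀ b : ZMod 2,
      (∃ c ∈ Icc (i, j) (i + 1, j + 1), f c = b) ∧ (∃ c ∈ Icc (i, j) (i + 1, j + 1), g c = b) := by
  have bottom_top : ∀ i ∈ range n, edgeWeight f g (i, 0) (i + 1, 0) +
      edgeWeight f g (i, n) (i + 1, n) = g (i, 0) + g (i + 1, 0) := by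
    intro i hi
    rw [Finset.mem_range] at hi
    simp [edgeWeight, hf_bot i hi.le, hf_bot (i + 1) hi, hf_top i hi.le]
  have sides : ∀ j ∈ range n,
      edgeWeight f g (0, j) (0, j + 1) + edgeWeight f g (n, j) (n, j + 1) = 0 := by
    intro j hj
    rw [Finset.mem_range] at hj
    simp [edgeWeight, hg_left j hj.le, hg_left (j + 1) hj, hg_right j hj.le, hg_right (j + 1) hj,
      CharTwo.add_self_eq_zero]
  have total : ∑ i ∈ range n, ∑ j ∈ range n, cellWeight f g i j = 1 := by
    rw [sum_cellWeight, Finset.sum_congr rfl bottom_top, Finset.sum_congr rfl sides,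
      sum_range_add_succ_of_charTwo (fun i => g (i, 0)), hg_left 0 n.zero_le,
      hg_right 0 n.zero_le]
    simp
  obtain ⟨i, hi, hrow⟩ := Finset.exists_ne_zero_of_sum_ne_zero (total ▸ one_ne_zero)
  obtain ⟨j, hj, hcell⟩ := Finset.exists_ne_zero_of_sum_ne_zero hrow
  exact ⟨i, Finset.mem_range.mp hi, j, Finset.mem_range.mp hj,
    exists_eq_of_cellWeight_ne_zero f g hcell⟩

end Parity

theorem lineMap_div_mem_Icc {a b : ℝ} (hab : a ≤ b) {i n : ℕ} (hi : i ≤ n) :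
    lineMap a b ((i : ℝ) / n) ∈ Icc a b := by
  rw [← segment_eq_Icc hab]
  exact lineMap_mem_segment ℝ a b
    ⟨by positivity, div_le_one_of_le₀ (by exact_mod_cast hi) (by positivity)⟩

theorem dist_lineMap_div_le {E : Type*} [NormedAddCommGroup E] [NormedSpace ℝ E] (a b : E)
    (n : ℕ) {i i' : ℕ} (h : i ≤ i') (h' : i' ≤ i + 1) :
    dist (lineMap a b ((i' : ℝ) / n)) (lineMap a b ((i : ℝ) / n)) ≤ dist a b / n := by
  have hstep : dist ((i' : ℝ) / n) ((i : ℝ) / n) ≤ 1 / n := by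
    rw [Real.dist_eq, ← sub_div, abs_div, Nat.abs_cast]
    gcongr
    have hi : (i : ℝ) ≤ i' := by exact_mod_cast h
    have hi' : (i' : ℝ) ≤ i + 1 := by exact_mod_cast h'
    exact abs_le.mpr ⟨by linarith, by linarith⟩
  calc _ = dist ((i' : ℝ) / n) ((i : ℝ) / n) * dist a b := dist_lineMap_lineMap a b _ _
    _ ≤ 1 / n * dist a b := by gcongr
    _ = dist a b / n := by ring

noncomputable def gridPoint (a₁ a₂ t₁ t₂ : ℝ) (n : ℕ) (c : ℕ × ℕ) : ℝ × ℝ :=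
  (lineMap a₁ a₂ ((c.1 : ℝ) / n), lineMap t₁ t₂ ((c.2 : ℝ) / n))

theorem gridPoint_mem {a₁ a₂ t₁ t₂ : ℝ} (ha : a₁ ≤ a₂) (ht : t₁ ≤ t₂) {n : ℕ} {c : ℕ × ℕ}
    (hc : c ≤ (n, n)) : gridPoint a₁ a₂ t₁ t₂ n c ∈ Icc a₁ a₂ ×ˢ Icc t₁ t₂ :=
  ⟨lineMap_div_mem_Icc ha hc.1, lineMap_div_mem_Icc ht hc.2⟩

theorem dist_gridPoint_le (a₁ a₂ t₁ t₂ : ℝ) (n : ℕ) {i j : ℕ} {c : ℕ × ℕ}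
    (hc : c ∈ Icc (i, j) (i + 1, j + 1)) :
    dist (gridPoint a₁ a₂ t₁ t₂ n c) (gridPoint a₁ a₂ t₁ t₂ n (i, j)) ≤
      dist (a₁, t₁) (a₂, t₂) / n := by
  rw [Prod.dist_eq, Prod.dist_eq, ← max_div_div_right (Nat.cast_nonneg n)]
  exact max_le_max (dist_lineMap_div_le a₁ a₂ n hc.1.1 hc.2.1)
    (dist_lineMap_div_le t₁ t₂ n hc.1.2 hc.2.2)

noncomputable def signLabel (x : ℝ) : ZMod 2 := if 0 < x then 1 else 0

theorem signLabel_eq_one {x : ℝ} : signLabel x = 1 ↔ 0 < x := by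
  unfold signLabel; split_ifs with h <;> simp [h]

theorem signLabel_eq_zero {x : ℝ} : signLabel x = 0 ↔ x ≤ 0 := by
  unfold signLabel; split_ifs with h <;> simpa using h

theorem abs_lt_of_forall_exists_signLabel_eq {X : Type*} [PseudoMetricSpace X] {F : X → ℝ}
    {K : Set X} {p : X} {r ε : ℝ} (hF : ∀ x ∈ K, dist x p < r → dist (F x) (F p) < ε)
    (hsign : ∀ b, ∃ u ∈ K, dist u p < r ∧ signLabel (F u) = b) : |F p| < ε := by
  obtain ⟨u, hu, hup, hFu⟩ := hsign 1
  obtain ⟨v, hv, hvp, hFv⟩ := hsign 0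
  have hu' := hF u hu hup
  have hv' := hF v hv hvp
  rw [signLabel_eq_one] at hFu
  rw [signLabel_eq_zero] at hFv
  rw [Real.dist_eq, abs_lt] at hu' hv'
  rw [abs_lt]
  constructor <;> linarith

theorem exists_forall_exists_signLabel_eq {a₁ a₂ t₁ t₂ : ℝ} (ha : a₁ ≤ a₂) (ht : t₁ ≤ t₂)
    {F G : ℝ × ℝ → ℝ}
    (hF₁ : ∀ a ∈ Icc a₁ a₂, 0 < F (a, t₁)) (hF₂ : ∀ a ∈ Icc a₁ a₂, F (a, t₂) < 0)
    (hG₁ : ∀ t ∈ Icc t₁ t₂, G (a₁, t) < 0) (hG₂ : ∀ t ∈ Icc t₁ t₂, 0 < G (a₂, t))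
    {r : ℝ} (hr : 0 < r) :
    ∃ p ∈ Icc a₁ a₂ ×ˢ Icc t₁ t₂, ∀ b,
      (∃ u ∈ Icc a₁ a₂ ×ˢ Icc t₁ t₂, dist u p < r ∧ signLabel (F u) = b) ∧
      (∃ u ∈ Icc a₁ a₂ ×ˢ Icc t₁ t₂, dist u p < r ∧ signLabel (G u) = b) := by
  obtain ⟨n, hn⟩ := exists_nat_gt (dist (a₁, t₁) (a₂, t₂) / r)
  have hn₀ : (0 : ℝ) < n := lt_of_le_of_lt (by positivity) hn
  have hmesh : dist (a₁, t₁) (a₂, t₂) / n < r := by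
    rwa [div_lt_iff₀ hn₀, mul_comm, ← div_lt_iff₀ hr]
  set P := gridPoint a₁ a₂ t₁ t₂ n
  obtain ⟨i, hi, j, hj, hcell⟩ := exists_cell_forall_exists_eq
    (f := fun c => signLabel (F (P c))) (g := fun c => signLabel (G (P c)))
    (fun i hi => signLabel_eq_one.mpr <| by
      simpa [P, gridPoint] using hF₁ _ (lineMap_div_mem_Icc ha hi))
    (fun i hi => signLabel_eq_zero.mpr <| by
      simpa [P, gridPoint, hn₀.ne'] using (hF₂ _ (lineMap_div_mem_Icc ha hi)).le)
    (fun j hj => signLabel_eq_zero.mpr <| by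
      simpa [P, gridPoint] using (hG₁ _ (lineMap_div_mem_Icc ht hj)).le)
    (fun j hj => signLabel_eq_one.mpr <| by
      simpa [P, gridPoint, hn₀.ne'] using hG₂ _ (lineMap_div_mem_Icc ht hj))
  have hnear c (hc : c ∈ Icc (i, j) (i + 1, j + 1)) :
      P c ∈ Icc a₁ a₂ ×ˢ Icc t₁ t₂ ∧ dist (P c) (P (i, j)) < r :=
    ⟨gridPoint_mem ha ht (hc.2.trans ⟨hi, hj⟩),
      (dist_gridPoint_le a₁ a₂ t₁ t₂ n hc).trans_lt hmesh⟩
  refine ⟨P (i, j), gridPoint_mem ha ht ⟨hi.le, hj.le⟩, fun b => ?_⟩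
  obtain ⟨⟨u, hu, hFu⟩, ⟨w, hw, hGw⟩⟩ := hcell b
  exact ⟨⟨P u, (hnear u hu).1, (hnear u hu).2, hFu⟩, ⟨P w, (hnear w hw).1, (hnear w hw).2, hGw⟩⟩

theorem exists_abs_lt {a₁ a₂ t₁ t₂ : ℝ} (ha : a₁ ≤ a₂) (ht : t₁ ≤ t₂) {F G : ℝ × ℝ → ℝ}
    (hF : ContinuousOn F (Icc a₁ a₂ ×ˢ Icc t₁ t₂)) (hG : ContinuousOn G (Icc a₁ a₂ ×ˢ Icc t₁ t₂))
    (hF₁ : ∀ a ∈ Icc a₁ a₂, 0 < F (a, t₁)) (hF₂ : ∀ a ∈ Icc a₁ a₂, F (a, t₂) < 0)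
    (hG₁ : ∀ t ∈ Icc t₁ t₂, G (a₁, t) < 0) (hG₂ : ∀ t ∈ Icc t₁ t₂, 0 < G (a₂, t))
    {ε : ℝ} (hε : 0 < ε) : ∃ p ∈ Icc a₁ a₂ ×ˢ Icc t₁ t₂, |F p| < ε ∧ |G p| < ε := by
  have hK : IsCompact (Icc a₁ a₂ ×ˢ Icc t₁ t₂) := isCompact_Icc.prod isCompact_Icc
  obtain ⟨δF, hδF, hFδ⟩ :=
    Metric.uniformContinuousOn_iff.mp (hK.uniformContinuousOn_of_continuous hF) ε hε
  obtain ⟨δG, hδG, hGδ⟩ :=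
    Metric.uniformContinuousOn_iff.mp (hK.uniformContinuousOn_of_continuous hG) ε hε
  obtain ⟨p, hp, hsign⟩ :=
    exists_forall_exists_signLabel_eq ha ht hF₁ hF₂ hG₁ hG₂ (lt_min hδF hδG)
  refine ⟨p, hp, abs_lt_of_forall_exists_signLabel_eq (fun x hx hxp => ?_) fun b => (hsign b).1,
    abs_lt_of_forall_exists_signLabel_eq (fun x hx hxp => ?_) fun b => (hsign b).2⟩
  · exact hFδ x hx p hp (hxp.trans_le (min_le_left _ _))
  · exact hGδ x hx p hp (hxp.trans_le (min_le_right _ _))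

end PoincareMiranda

/-- Poincaré–Miranda theorem in two variables. -/
theorem poincare_miranda_two_var (a₁ a₂ t₁ t₂ : ℝ) (ha : a₁ < a₂) (ht : t₁ < t₂)
    (F G : ℝ × ℝ → ℝ)
    (hF : ContinuousOn F (Icc a₁ a₂ ×ˢ Icc t₁ t₂))
    (hG : ContinuousOn G (Icc a₁ a₂ ×ˢ Icc t₁ t₂))
    (hF₁ : ∀ a ∈ Icc a₁ a₂, 0 < F (a, t₁))
    (hF₂ : ∀ a ∈ Icc a₁ a₂, F (a, t₂) < 0)
    (hG₁ : ∀ t ∈ Icc t₁ t₂, G (a₁, t) < 0)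
    (hG₂ : ∀ t ∈ Icc t₁ t₂, 0 < G (a₂, t)) :
    ∃ p ∈ Icc a₁ a₂ ×ˢ Icc t₁ t₂, F p = 0 ∧ G p = 0 := by
  have hK : IsCompact (Icc a₁ a₂ ×ˢ Icc t₁ t₂) := isCompact_Icc.prod isCompact_Icc
  obtain ⟨p, hp, hp₀⟩ := hK.exists_eq_zero_of_forall_exists_norm_lt (hF.prodMk hG) fun ε hε => by
    obtain ⟨p, hp, hFp, hGp⟩ :=
      PoincareMiranda.exists_abs_lt ha.le ht.le hF hG hF₁ hF₂ hG₁ hG₂ hε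
    exact ⟨p, hp, by simpa using ⟨hFp, hGp⟩⟩
  exact ⟨p, hp, Prod.mk_eq_zero.mp hp₀⟩
end

section
/- Let f : ℝ³ → ℝ³ be defined by f(u) = (cos u₃, sin u₃ / sin u₁, −3 (cos u₁/sin u₁) sin u₃ + 2 (cos u₃ / sin u₁) (cos 2u₂ / sin 2u₂) − 3), and let U₂ = {u ∈ ℝ³ : 33/25 < u₁ < 393/250, 521/1000 < u₂ < 787/1000, 1569/1000 < u₃ < 3143/1000}. Then for every u ∈ U₂: |f₁(u)| ≤ 1, |f₂(u)| < 1.033, and |f₃(u)| < 4.98. -/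
/-!
Near `π / 2` the sine is close to `1` and the cosine close to `0`: on the box, `sin u₁ ≥ 0.9685`,
which already gives the bound on `f₂`, while `cot u₁` and `cot (2 u₂)` stay small. Writing
`f₃ + 3 = A sin u₃ + B cos u₃`, Cauchy–Schwarz gives `|f₃ + 3| ≤ √(A² + B²)`; bounding `|A|` and
`|B|` separately is too crude, because the extremes of the two terms occur at different `u₃`.
-/

open Real

namespace Real

lemma abs_cos_le_abs_sub_pi_div_two (x : ℝ) : |cos x| ≤ |x - π / 2| := by
  rw [← sin_pi_div_two_sub, ← abs_neg (x - π / 2), neg_sub]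
  exact abs_sin_le_abs

lemma one_sub_sq_div_two_le_sin_of_abs_sub_pi_div_two_le {x δ : ℝ} (hx : |x - π / 2| ≤ δ) :
    1 - δ ^ 2 / 2 ≤ sin x := by
  have hsq : (x - π / 2) ^ 2 ≤ δ ^ 2 := sq_le_sq' (abs_le.1 hx).1 (abs_le.1 hx).2
  have hsin : 1 - (x - π / 2) ^ 2 / 2 ≤ sin x := cos_sub_pi_div_two x ▸ one_sub_sq_div_two_le_cos
  linarith

lemma abs_cot_le_of_abs_sub_pi_div_two_le {x δ : ℝ} (hx : |x - π / 2| ≤ δ) (hδ : δ ^ 2 < 2) :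
    |cot x| ≤ δ / (1 - δ ^ 2 / 2) := by
  have hsin := one_sub_sq_div_two_le_sin_of_abs_sub_pi_div_two_le hx
  have hpos : 0 < 1 - δ ^ 2 / 2 := by linarith
  rw [cot_eq_cos_div_sin, abs_div, abs_of_pos (hpos.trans_le hsin)]
  have hcos := (abs_cos_le_abs_sub_pi_div_two x).trans hx
  exact div_le_div₀ ((abs_nonneg _).trans hcos) hcos hpos hsin

lemma abs_mul_sin_add_mul_cos_le_sqrt (a b θ : ℝ) :
    |a * sin θ + b * cos θ| ≤ √(a ^ 2 + b ^ 2) :=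
  abs_le_sqrt (by nlinarith [sq_nonneg (a * cos θ - b * sin θ), sin_sq_add_cos_sq θ])

lemma abs_mul_sin_add_mul_cos_lt {a b c : ℝ} (h : a ^ 2 + b ^ 2 < c ^ 2) (hc : 0 < c) (θ : ℝ) :
    |a * sin θ + b * cos θ| < c :=
  (abs_mul_sin_add_mul_cos_le_sqrt a b θ).trans_lt ((sqrt_lt' hc).2 h)

end Real

theorem vector_field_bounds_on_U2_general (u₁ u₂ u₃ : ℝ)
    (h₁ : 33 / 25 < u₁ ∧ u₁ < 393 / 250)
    (h₂ : 521 / 1000 < u₂ ∧ u₂ < 787 / 1000) :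
    |cos u₃| ≤ 1 ∧
    |sin u₃ / sin u₁| < 1.033 ∧
    |(-3) * (cos u₁ / sin u₁) * sin u₃
      + 2 * (cos u₃ / sin u₁) * (cos (2 * u₂) / sin (2 * u₂)) - 3| < 4.98 := by
  have hπ : (3.14 : ℝ) < π ∧ π < 3.1416 := ⟨pi_gt_d2, pi_lt_d4⟩
  have hu₁ : |u₁ - π / 2| ≤ 0.2508 := abs_le.2 ⟨by linarith, by linarith⟩
  have hu₂ : |2 * u₂ - π / 2| ≤ 0.53 := abs_le.2 ⟨by linarith, by linarith⟩
  have hsin₁ : 0.9685 ≤ sin u₁ := by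
    linarith [one_sub_sq_div_two_le_sin_of_abs_sub_pi_div_two_le hu₁]
  have hcot₁ : |cot u₁| ≤ 1 / 3 :=
    (abs_cot_le_of_abs_sub_pi_div_two_le hu₁ (by norm_num)).trans (by norm_num)
  have hcot₂ : |cot (2 * u₂)| ≤ 2 / 3 :=
    (abs_cot_le_of_abs_sub_pi_div_two_le hu₂ (by norm_num)).trans (by norm_num)
  have hB : |2 * cot (2 * u₂) / sin u₁| ≤ 1.4 := by
    rw [abs_div, abs_mul, abs_of_pos (by linarith : (0 : ℝ) < sin u₁), div_le_iff₀ (by linarith)]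
    norm_num at hcot₂ ⊢
    linarith
  have hcoeff : (-3 * cot u₁) ^ 2 + (2 * cot (2 * u₂) / sin u₁) ^ 2 < 1.98 ^ 2 := by
    rw [← sq_abs (-3 * cot u₁), ← sq_abs (2 * cot (2 * u₂) / sin u₁), abs_mul]
    nlinarith [abs_nonneg (cot u₁), abs_nonneg (2 * cot (2 * u₂) / sin u₁)]
  have hf₃ := abs_mul_sin_add_mul_cos_lt hcoeff (by norm_num) u₃
  refine ⟨abs_cos_le_one u₃, ?_, ?_⟩
  · rw [abs_div, abs_of_pos (by linarith : (0 : ℝ) < sin u₁), div_lt_iff₀ (by linarith)]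
    linarith [abs_sin_le_one u₃]
  · have hsplit : (-3) * (cos u₁ / sin u₁) * sin u₃
        + 2 * (cos u₃ / sin u₁) * (cos (2 * u₂) / sin (2 * u₂)) - 3
        = (-3 * cot u₁) * sin u₃ + (2 * cot (2 * u₂) / sin u₁) * cos u₃ - 3 := by
      simp only [cot_eq_cos_div_sin]; ring
    rw [hsplit, abs_lt]
    rw [abs_lt] at hf₃
    constructor <;> linarith

/-- Bounds on the components of the vector field
`f(u) = (cos u₃, sin u₃ / sin u₁, −3 cot u₁ sin u₃ + 2 (cos u₃ / sin u₁) cot (2u₂) − 3)`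
on the open box `U₂`. -/
theorem vector_field_bounds_on_U2 (u₁ u₂ u₃ : ℝ)
    (h₁ : 33 / 25 < u₁ ∧ u₁ < 393 / 250)
    (h₂ : 521 / 1000 < u₂ ∧ u₂ < 787 / 1000)
    (h₃ : 1569 / 1000 < u₃ ∧ u₃ < 3143 / 1000) :
    |cos u₃| ≤ 1 ∧
    |sin u₃ / sin u₁| < 1.033 ∧
    |(-3) * (cos u₁ / sin u₁) * sin u₃
      + 2 * (cos u₃ / sin u₁) * (cos (2 * u₂) / sin (2 * u₂)) - 3| < 4.98 :=
  vector_field_bounds_on_U2_general u₁ u₂ u₃ h₁ h₂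
end

section
/- Let f : ℝ³ → ℝ³ be defined by f(u) = (cos u₃, sin u₃ / sin u₁, −3 (cos u₁/sin u₁) sin u₃ + 2 (cos u₃ / sin u₁) (cos 2u₂ / sin 2u₂) − 3), let U₂ = {u ∈ ℝ³ : 33/25 < u₁ < 393/250, 521/1000 < u₂ < 787/1000, 1569/1000 < u₃ < 3143/1000}, and define F₁ = (Df)·f : ℝ³ → ℝ³ (the directional derivative of f along itself). Then for every u ∈ U₂: |F₁₁(u)| < 4.98, |F₁₂(u)| < 5.41, and |F₁₃(u)| < 15.26. -/
open Real

/-- The vector field of the CMC profile-curve ODE system, identifying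
`(r, θ, α)` with `(u 0, u 1, u 2)`. -/
noncomputable def cmcField : EuclideanSpace ℝ (Fin 3) → EuclideanSpace ℝ (Fin 3) :=
  fun u => (WithLp.equiv 2 (Fin 3 → ℝ)).symm
    ![cos (u 2),
      sin (u 2) / sin (u 0),
      -3 * (cos (u 0) / sin (u 0)) * sin (u 2)
        + 2 * (cos (u 2) / sin (u 0)) * (cos (2 * u 1) / sin (2 * u 1)) - 3]

/-!
On `U₂` both `r` and `2θ` lie within `0.2508`, resp. `0.5288`, of `π / 2`, so the Taylor bound
for `sin` makes `|cos r|` and `|cos 2θ|` small, and `sin² + cos² = 1` then bounds `cot r`,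
`csc r` and `cot 2θ`. In these variables, and using `csc² 2θ = 1 + cot² 2θ`, every component of
`F₁` is a polynomial in `cot r, csc r, cot 2θ, sin α, cos α`; the triangle inequality together
with `|sin α|, |cos α| ≤ 1` gives the three bounds.
-/

theorem abs_sin_le_sin_of_abs_le {y δ : ℝ} (hy : |y| ≤ δ) (hδ : δ ≤ π / 2) :
    |sin y| ≤ sin δ := by
  rcases le_total 0 y with h | h
  · rw [abs_of_nonneg h] at hy
    rw [abs_of_nonneg (sin_nonneg_of_nonneg_of_le_pi h (by linarith [pi_pos]))]
    exact sin_le_sin_of_le_of_le_pi_div_two (by linarith [pi_pos]) hδ hy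
  · rw [abs_of_nonpos h] at hy
    rw [abs_of_nonpos (sin_nonpos_of_nonpos_of_neg_pi_le h (by linarith [pi_pos])), ← sin_neg]
    exact sin_le_sin_of_le_of_le_pi_div_two (by linarith [pi_pos]) hδ hy

theorem sin_le_sub_cube_add_pow_five {δ : ℝ} (h₀ : 0 ≤ δ) (h₁ : δ ≤ 1) :
    sin δ ≤ δ - δ ^ 3 / 6 + δ ^ 5 / 100 := by
  have h := sin_bound (x := δ) (by rwa [abs_of_nonneg h₀])
  rw [abs_of_nonneg h₀] at h
  linarith [le_abs_self (sin δ - (δ - δ ^ 3 / 6))]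

theorem abs_cos_le_of_abs_sub_pi_div_two_le {x δ : ℝ} (hx : |x - π / 2| ≤ δ)
    (h₀ : 0 ≤ δ) (h₁ : δ ≤ 1) : |cos x| ≤ δ - δ ^ 3 / 6 + δ ^ 5 / 100 :=
  calc |cos x| = |sin (x - π / 2)| := by rw [sin_sub_pi_div_two, abs_neg]
    _ ≤ sin δ := abs_sin_le_sin_of_abs_le hx (h₁.trans (by linarith [pi_gt_three]))
    _ ≤ _ := sin_le_sub_cube_add_pow_five h₀ h₁

theorem sin_ne_zero_of_abs_cos_lt_one {x : ℝ} (h : |cos x| < 1) : sin x ≠ 0 := by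
  rw [Ne, sin_eq_zero_iff_cos_eq]
  rintro (h' | h') <;> simp [h'] at h

theorem abs_cot_le_of_abs_cos_le {x b B : ℝ} (hx : |cos x| ≤ b) (hB : 0 ≤ B)
    (hbB : b ^ 2 ≤ B ^ 2 * (1 - b ^ 2)) : |cot x| ≤ B := by
  have hcos : cos x ^ 2 ≤ b ^ 2 := by simpa using pow_le_pow_left₀ (abs_nonneg _) hx 2
  have hsin : sin x ≠ 0 :=
    sin_ne_zero_of_abs_cos_lt_one ((sq_lt_one_iff_abs_lt_one _).1 (by nlinarith [sq_nonneg B]))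
  rw [cot_eq_cos_div_sin, abs_div, div_le_iff₀ (abs_pos.2 hsin)]
  refine abs_le_of_sq_le_sq ?_ (by positivity)
  rw [mul_pow, sq_abs]
  nlinarith [sin_sq_add_cos_sq x,
    mul_le_mul_of_nonneg_right hcos (by positivity : (0 : ℝ) ≤ 1 + B ^ 2)]

theorem abs_inv_sin_le_of_abs_cos_le {x b B : ℝ} (hx : |cos x| ≤ b) (hB : 0 ≤ B)
    (hbB : 1 ≤ B ^ 2 * (1 - b ^ 2)) : |(sin x)⁻¹| ≤ B := by
  have hcos : cos x ^ 2 ≤ b ^ 2 := by simpa using pow_le_pow_left₀ (abs_nonneg _) hx 2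
  have hsin : 1 ≤ (B * |sin x|) ^ 2 := by
    rw [mul_pow, sq_abs]
    nlinarith [sin_sq_add_cos_sq x, mul_le_mul_of_nonneg_left hcos (sq_nonneg B)]
  have hsin₀ : sin x ≠ 0 := by rintro h; norm_num [h] at hsin
  rw [abs_inv, inv_le_iff_one_le_mul₀ (abs_pos.2 hsin₀)]
  simpa using abs_le_of_sq_le_sq (a := 1) (by rwa [one_pow]) (by positivity : 0 ≤ B * |sin x|)

theorem fderiv_apply_eq_of_hasDerivAt_line {E ι : Type*} [NormedAddCommGroup E]
    [NormedSpace ℝ E] [Fintype ι] {f : E → EuclideanSpace ℝ ι} {u v : E} {i : ι} {y : ℝ}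
    (hf : DifferentiableAt ℝ f u) (h : HasDerivAt (fun t : ℝ => f (u + t • v) i) y 0) :
    fderiv ℝ f u v i = y := by
  have hline : HasDerivAt (fun t : ℝ => u + t • v) v 0 := by
    simpa using ((hasDerivAt_id (0 : ℝ)).smul_const v).const_add u
  have hf' : HasFDerivAt f (fderiv ℝ f u) (u + (0 : ℝ) • v) := by simpa using hf.hasFDerivAt
  have hcomp := (EuclideanSpace.proj i).hasFDerivAt.comp_hasDerivAt 0 (hf'.comp_hasDerivAt 0 hline)
  simp only [Function.comp_def] at hcomp
  exact hcomp.unique h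

theorem hasDerivAt_apply_line {ι : Type*} (u v : EuclideanSpace ℝ ι) (j : ι) :
    HasDerivAt (fun t : ℝ => (u + t • v) j) (v j) 0 := by
  simpa using (hasDerivAt_mul_const (v j)).const_add (u j)

section Jacobian

variable {u : EuclideanSpace ℝ (Fin 3)}

theorem differentiableAt_cmcField (h₀ : sin (u 0) ≠ 0) (h₁ : sin (2 * u 1) ≠ 0) :
    DifferentiableAt ℝ cmcField u := by
  rw [differentiableAt_euclidean]
  intro i
  fin_cases i <;> simp [cmcField] <;> fun_prop (disch := assumption)

theorem fderiv_cmcField_apply_zero (h₀ : sin (u 0) ≠ 0) (h₁ : sin (2 * u 1) ≠ 0)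
    (v : EuclideanSpace ℝ (Fin 3)) : fderiv ℝ cmcField u v 0 = -sin (u 2) * v 2 :=
  fderiv_apply_eq_of_hasDerivAt_line (differentiableAt_cmcField h₀ h₁)
    ((hasDerivAt_apply_line u v 2).cos.congr_deriv (by simp))

theorem fderiv_cmcField_apply_one (h₀ : sin (u 0) ≠ 0) (h₁ : sin (2 * u 1) ≠ 0)
    (v : EuclideanSpace ℝ (Fin 3)) :
    fderiv ℝ cmcField u v 1 = (cos (u 2) * v 2 - cot (u 0) * sin (u 2) * v 0) / sin (u 0) := by
  refine fderiv_apply_eq_of_hasDerivAt_line (differentiableAt_cmcField h₀ h₁) ?_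
  have := (hasDerivAt_apply_line u v 2).sin.div (hasDerivAt_apply_line u v 0).sin
    (by simpa using h₀)
  refine this.congr_deriv ?_
  simp only [zero_smul, add_zero, cot_eq_cos_div_sin]
  field_simp

theorem fderiv_cmcField_apply_two (h₀ : sin (u 0) ≠ 0) (h₁ : sin (2 * u 1) ≠ 0)
    (v : EuclideanSpace ℝ (Fin 3)) :
    fderiv ℝ cmcField u v 2
      = (3 * sin (u 2) - 2 * cos (u 2) * cos (u 0) * cot (2 * u 1)) / sin (u 0) ^ 2 * v 0
        - 4 * cos (u 2) / (sin (u 0) * sin (2 * u 1) ^ 2) * v 1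
        - (3 * cot (u 0) * cos (u 2) + 2 * sin (u 2) * cot (2 * u 1) / sin (u 0)) * v 2 := by
  refine fderiv_apply_eq_of_hasDerivAt_line (differentiableAt_cmcField h₀ h₁) ?_
  have hr := hasDerivAt_apply_line u v 0
  have hθ := (hasDerivAt_apply_line u v 1).const_mul 2
  have hα := hasDerivAt_apply_line u v 2
  have h₀' : sin ((u + (0 : ℝ) • v) 0) ≠ 0 := by simpa using h₀
  have h₁' : sin (2 * (u + (0 : ℝ) • v) 1) ≠ 0 := by simpa using h₁
  have := ((((hr.cos.div hr.sin h₀').const_mul (-3)).mul hα.sin).add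
    (((hα.cos.div hr.sin h₀').const_mul 2).mul (hθ.cos.div hθ.sin h₁'))).sub_const 3
  refine this.congr_deriv ?_
  simp only [zero_smul, add_zero, cot_eq_cos_div_sin, Pi.div_apply]
  field_simp
  linear_combination (3 * v 0 * sin (u 2) * sin (2 * u 1) ^ 2) * sin_sq_add_cos_sq (u 0)
    - (4 * sin (u 0) * cos (u 2) * v 1) * sin_sq_add_cos_sq (2 * u 1)

end Jacobian

/- `alphaRate` is `α'` and `cmcAccel` is `F₁`, both written in the variables `p = cot r`,
`q = csc r`, `k = cot 2θ`, `σ = sin α`, `γ = cos α`. -/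

def alphaRate (p q k σ γ : ℝ) : ℝ := -3 * p * σ + 2 * q * γ * k - 3

def cmcAccel (p q k σ γ : ℝ) : Fin 3 → ℝ :=
  ![-σ * alphaRate p q k σ γ,
    q * γ * alphaRate p q k σ γ - p * q * σ * γ,
    -(q ^ 2 * σ * γ * (1 + 4 * k ^ 2)) - 2 * p * q * γ ^ 2 * k
      - alphaRate p q k σ γ * (3 * p * γ + 2 * q * σ * k)]

theorem cmcField_apply_two_eq_alphaRate (u : EuclideanSpace ℝ (Fin 3)) :
    cmcField u 2
      = alphaRate (cot (u 0)) (sin (u 0))⁻¹ (cot (2 * u 1)) (sin (u 2)) (cos (u 2)) := by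
  have h : cmcField u 2 = -3 * (cos (u 0) / sin (u 0)) * sin (u 2)
      + 2 * (cos (u 2) / sin (u 0)) * (cos (2 * u 1) / sin (2 * u 1)) - 3 := rfl
  rw [h, alphaRate, cot_eq_cos_div_sin, cot_eq_cos_div_sin]
  ring

theorem fderiv_cmcField_self_apply {u : EuclideanSpace ℝ (Fin 3)} (h₀ : sin (u 0) ≠ 0)
    (h₁ : sin (2 * u 1) ≠ 0) (i : Fin 3) :
    fderiv ℝ cmcField u (cmcField u) i
      = cmcAccel (cot (u 0)) (sin (u 0))⁻¹ (cot (2 * u 1)) (sin (u 2)) (cos (u 2)) i := by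
  have hv₀ : cmcField u 0 = cos (u 2) := rfl
  have hv₁ : cmcField u 1 = sin (u 2) / sin (u 0) := rfl
  fin_cases i
  · simp [fderiv_cmcField_apply_zero h₀ h₁, cmcAccel, cmcField_apply_two_eq_alphaRate]
  · simp [fderiv_cmcField_apply_one h₀ h₁, cmcAccel, cmcField_apply_two_eq_alphaRate, hv₀]
    field_simp
  · simp [fderiv_cmcField_apply_two h₀ h₁, cmcAccel, cmcField_apply_two_eq_alphaRate, hv₀,
      hv₁, cot_eq_cos_div_sin]
    field_simp
    linear_combination (4 * cos (u 2) * sin (u 2)) * sin_sq_add_cos_sq (2 * u 1)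

section Bounds

variable {p q k σ γ : ℝ}

theorem abs_alphaRate_le (hp : |p| ≤ 0.2563) (hq : |q| ≤ 1.0324) (hk : |k| ≤ 0.5845)
    (hσ : |σ| ≤ 1) (hγ : |γ| ≤ 1) : |alphaRate p q k σ γ| ≤ 4.976 :=
  calc |alphaRate p q k σ γ| ≤ 3 * |p| * |σ| + 2 * |q| * |γ| * |k| + 3 := by
        refine (abs_sub _ _).trans ?_
        grw [abs_add_le]
        simp [abs_mul]
    _ ≤ 3 * 0.2563 * 1 + 2 * 1.0324 * 1 * 0.5845 + 3 := by gcongr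
    _ ≤ 4.976 := by norm_num

theorem abs_cmcAccel_zero_lt (hp : |p| ≤ 0.2563) (hq : |q| ≤ 1.0324) (hk : |k| ≤ 0.5845)
    (hσ : |σ| ≤ 1) (hγ : |γ| ≤ 1) : |cmcAccel p q k σ γ 0| < 4.98 :=
  calc |cmcAccel p q k σ γ 0| = |σ| * |alphaRate p q k σ γ| := by simp [cmcAccel, abs_mul]
    _ ≤ 1 * 4.976 := by gcongr; exact abs_alphaRate_le hp hq hk hσ hγ
    _ < 4.98 := by norm_num

theorem abs_cmcAccel_one_lt (hp : |p| ≤ 0.2563) (hq : |q| ≤ 1.0324) (hk : |k| ≤ 0.5845)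
    (hσ : |σ| ≤ 1) (hγ : |γ| ≤ 1) : |cmcAccel p q k σ γ 1| < 5.41 :=
  calc |cmcAccel p q k σ γ 1|
        ≤ |q| * |γ| * |alphaRate p q k σ γ| + |p| * |q| * |σ| * |γ| := by
        dsimp [cmcAccel]
        refine (abs_sub _ _).trans_eq ?_
        simp [abs_mul]
    _ ≤ 1.0324 * 1 * 4.976 + 0.2563 * 1.0324 * 1 * 1 := by
        gcongr; exact abs_alphaRate_le hp hq hk hσ hγ
    _ < 5.41 := by norm_num

theorem abs_cmcAccel_two_lt (hp : |p| ≤ 0.2563) (hq : |q| ≤ 1.0324) (hk : |k| ≤ 0.5845)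
    (hσ : |σ| ≤ 1) (hγ : |γ| ≤ 1) : |cmcAccel p q k σ γ 2| < 15.26 :=
  calc |cmcAccel p q k σ γ 2|
        ≤ |q| ^ 2 * |σ| * |γ| * (1 + 4 * |k| ^ 2) + 2 * |p| * |q| * |γ| ^ 2 * |k|
          + |alphaRate p q k σ γ| * (3 * |p| * |γ| + 2 * |q| * |σ| * |k|) := by
        dsimp [cmcAccel]
        refine ((abs_sub _ _).trans (add_le_add_left (abs_sub _ _) _)).trans ?_
        simp only [abs_neg, abs_mul, abs_pow, Nat.abs_ofNat]
        rw [abs_of_nonneg (by positivity : (0 : ℝ) ≤ 1 + 4 * k ^ 2), ← sq_abs k]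
        gcongr
        exact (abs_add_le _ _).trans_eq (by simp only [abs_mul, Nat.abs_ofNat])
    _ ≤ 1.0324 ^ 2 * 1 * 1 * (1 + 4 * 0.5845 ^ 2) + 2 * 0.2563 * 1.0324 * 1 ^ 2 * 0.5845
          + 4.976 * (3 * 0.2563 * 1 + 2 * 1.0324 * 1 * 0.5845) := by
        gcongr; exact abs_alphaRate_le hp hq hk hσ hγ
    _ < 15.26 := by norm_num

end Bounds

theorem F1_bounds_on_U2_general (u : EuclideanSpace ℝ (Fin 3))
    (h₁ : 33 / 25 < u 0 ∧ u 0 < 393 / 250)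
    (h₂ : 521 / 1000 < u 1 ∧ u 1 < 787 / 1000) :
    |fderiv ℝ cmcField u (cmcField u) 0| < 4.98 ∧
    |fderiv ℝ cmcField u (cmcField u) 1| < 5.41 ∧
    |fderiv ℝ cmcField u (cmcField u) 2| < 15.26 := by
  have hr : |u 0 - π / 2| ≤ 0.2508 :=
    abs_le.2 ⟨by linarith [pi_lt_d6, h₁.1], by linarith [pi_gt_d6, h₁.2]⟩
  have hθ : |2 * u 1 - π / 2| ≤ 0.5288 :=
    abs_le.2 ⟨by linarith [pi_lt_d6, h₂.1], by linarith [pi_gt_d6, h₂.2]⟩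
  have hc : |cos (u 0)| ≤ 0.2482 :=
    (abs_cos_le_of_abs_sub_pi_div_two_le hr (by norm_num) (by norm_num)).trans (by norm_num)
  have hC : |cos (2 * u 1)| ≤ 0.5046 :=
    (abs_cos_le_of_abs_sub_pi_div_two_le hθ (by norm_num) (by norm_num)).trans (by norm_num)
  have hp := abs_cot_le_of_abs_cos_le hc (B := 0.2563) (by norm_num) (by norm_num)
  have hq := abs_inv_sin_le_of_abs_cos_le hc (B := 1.0324) (by norm_num) (by norm_num)
  have hk := abs_cot_le_of_abs_cos_le hC (B := 0.5845) (by norm_num) (by norm_num)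
  have hσ := abs_sin_le_one (u 2)
  have hγ := abs_cos_le_one (u 2)
  simp only [fderiv_cmcField_self_apply (sin_ne_zero_of_abs_cos_lt_one (hc.trans_lt (by norm_num)))
    (sin_ne_zero_of_abs_cos_lt_one (hC.trans_lt (by norm_num)))]
  exact ⟨abs_cmcAccel_zero_lt hp hq hk hσ hγ, abs_cmcAccel_one_lt hp hq hk hσ hγ,
    abs_cmcAccel_two_lt hp hq hk hσ hγ⟩

/-- Bounds on the components of `F₁ = (Df)·f`, the derivative of the vector
field along itself, on the open box `U₂`. -/
theorem F1_bounds_on_U2 (u : EuclideanSpace ℝ (Fin 3))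
    (h₁ : 33 / 25 < u 0 ∧ u 0 < 393 / 250)
    (h₂ : 521 / 1000 < u 1 ∧ u 1 < 787 / 1000)
    (h₃ : 1569 / 1000 < u 2 ∧ u 2 < 3143 / 1000) :
    |fderiv ℝ cmcField u (cmcField u) 0| < 4.98 ∧
    |fderiv ℝ cmcField u (cmcField u) 1| < 5.41 ∧
    |fderiv ℝ cmcField u (cmcField u) 2| < 15.26 :=
  F1_bounds_on_U2_general u h₁ h₂
end
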